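/- Suppose the leader is stopped at position p₂ and the follower has speed v₁(t) > 0 and gap e_p(t) = p₂ − p₁(t) − l_c. If e_p(t) ≥ s₀ + ρ v₁(t) + v₁(t)²/(2|u_min|), then the follower braking at maximal deceleration u_min < 0 (in continuous time) comes to rest without its gap falling below s₀. -/

import Mathlib

/-!
Under constant deceleration `u < 0` the distance covered after time `σ` is
`v σ + u σ² / 2 = v² / (2|u|) - (v + u σ)² / (2|u|)`, so it never exceeds the braking distance
`v² / (2|u|)`. The gap therefore stays above `e_p - v² / (2|u|) ≥ s₀ + ρ v ≥ s₀`.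
-/

lemma braking_distance_sub_displacement {u : ℝ} (hu : u < 0) (v σ : ℝ) :
    v ^ 2 / (2 * |u|) - (v * σ + 1 / 2 * u * σ ^ 2) = (v + u * σ) ^ 2 / (2 * |u|) := by
  rw [abs_of_neg hu]
  field_simp [hu.ne]
  ring

lemma displacement_le_braking_distance {u : ℝ} (hu : u < 0) (v σ : ℝ) :
    v * σ + 1 / 2 * u * σ ^ 2 ≤ v ^ 2 / (2 * |u|) := by
  have hsq : 0 ≤ (v + u * σ) ^ 2 / (2 * |u|) := by positivity
  linarith [braking_distance_sub_displacement hu v σ]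

lemma velocity_at_stopping_time {u : ℝ} (hu : u < 0) (v : ℝ) : v + u * (v / |u|) = 0 := by
  rw [abs_of_neg hu]
  field_simp [hu.ne]
  ring

theorem stmt10_general (p₁ p₂ lc v₁ ρ s₀ umin : ℝ) (hρ : 0 ≤ ρ)
    (humin : umin < 0) (hv : 0 < v₁)
    (hgap : p₂ - p₁ - lc ≥ s₀ + ρ * v₁ + v₁ ^ 2 / (2 * |umin|)) :
    (v₁ + umin * (v₁ / |umin|) = 0) ∧
    ∀ σ : ℝ, σ ∈ Set.Icc 0 (v₁ / |umin|) →
      p₂ - (p₁ + v₁ * σ + (1 / 2) * umin * σ ^ 2) - lc ≥ s₀ := by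
  refine ⟨velocity_at_stopping_time humin v₁, fun σ _ => ?_⟩
  have hρv : 0 ≤ ρ * v₁ := mul_nonneg hρ hv.le
  linarith [displacement_le_braking_distance humin v₁ σ]

theorem stmt10 (p₁ p₂ lc v₁ ρ s₀ umin : ℝ) (hlc : 0 ≤ lc) (hρ : 0 ≤ ρ)
    (hs₀ : 0 < s₀) (humin : umin < 0) (hv : 0 < v₁)
    (hgap : p₂ - p₁ - lc ≥ s₀ + ρ * v₁ + v₁ ^ 2 / (2 * |umin|)) :
    (v₁ + umin * (v₁ / |umin|) = 0) ∧
    ∀ σ : ℝ, σ ∈ Set.Icc 0 (v₁ / |umin|) →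
      p₂ - (p₁ + v₁ * σ + (1 / 2) * umin * σ ^ 2) - lc ≥ s₀ :=
  stmt10_general p₁ p₂ lc v₁ ρ s₀ umin hρ humin hv hgap
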